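/- Let x_ν > 0 solve 2x·Q(x)/q(x) + 1 - ν^{-1} = 0, where q(x) = π^{-1/2}e^{-x²} and Q(x) = ∫_{-∞}^x q(y) dy. Set z = (2ν√π)^{-1} and x̃_ν = (log z - (1/2)·log log z)^{1/2}. Then there is ν₀ > 0 such that for all 0 < ν < ν₀, |x_ν - x̃_ν| ≤ (1/2)·(log z - (1/2)·log log z)^{-1/2}·(log log z)/(log z). -/

import Mathlib

/-!
Since `q(x)/(2x)` bounds the Gaussian tail `1 - Q(x)` (compare `q` with `(y/x) q(y)` beyond `x`),
we have `1 - q(x)/(2x) ≤ Q(x) ≤ 1`, and the equation `2xQ(x)/q(x) = ν⁻¹ - 1`, which reads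
`2√π · x e^{x²} · Q(x) = ν⁻¹ - 1`, pins `x e^{x²}` into `[z - 1/2, z]`.

The map `x ↦ x e^{x²}` is increasing. With `ℓ = log z`, `s = (ℓ - ½ log ℓ)^{1/2}` and
`2sδ = log ℓ / ℓ` one has `√ℓ e^{s²} = z` and `s ≈ √ℓ (1 - log ℓ / (4ℓ))`, so
`(s ± δ) e^{(s ± δ)²} ≈ z (1 - log ℓ / (4ℓ)) e^{± log ℓ / ℓ}`; the elementary estimates
`1 + u ≤ e^u` show that `s + δ` overshoots `z` and `s - δ` falls short of `z - 1/2`, which traps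
`x` in `[s - δ, s + δ]`.
-/

open Real MeasureTheory

/-- `q(x) = π^{-1/2} e^{-x²}`, the density of `N(0,1/2)`. -/
noncomputable def qdens (x : ℝ) : ℝ := Real.pi ^ (-(1 : ℝ) / 2) * Real.exp (-x ^ 2)

/-- `Q(x) = ∫_{-∞}^x q(y) dy`, the CDF of `N(0,1/2)`. -/
noncomputable def Qcdf (x : ℝ) : ℝ := ∫ y in Set.Iic x, qdens y

open Set Filter Topology

lemma qdens_eq (x : ℝ) : qdens x = exp (-x ^ 2) / √π := by
  have h : π ^ (-(1 : ℝ) / 2) = (√π)⁻¹ := by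
    rw [sqrt_eq_rpow, ← rpow_neg pi_pos.le]; norm_num
  rw [qdens, h, inv_mul_eq_div]

lemma qdens_pos (x : ℝ) : 0 < qdens x := by
  rw [qdens_eq]; positivity

lemma integrable_qdens : Integrable qdens := by
  have h := (integrable_exp_neg_mul_sq one_pos).const_mul (π ^ (-(1 : ℝ) / 2))
  simp only [neg_mul, one_mul] at h
  exact h

lemma integrable_mul_qdens : Integrable fun y => y * qdens y := by
  simpa [qdens, mul_left_comm] using
    (integrable_mul_exp_neg_mul_sq one_pos).const_mul (π ^ (-(1 : ℝ) / 2))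

lemma integral_qdens : ∫ y, qdens y = 1 := by
  simp_rw [qdens_eq, integral_div]
  have h : ∫ y, exp (-y ^ 2) = √π := by simpa using integral_gaussian 1
  rw [h, div_self (sqrt_pos.2 pi_pos).ne']

lemma Qcdf_le_one (x : ℝ) : Qcdf x ≤ 1 :=
  integral_qdens ▸ setIntegral_le_integral integrable_qdens (.of_forall fun y => (qdens_pos y).le)

lemma hasDerivAt_qdens (x : ℝ) : HasDerivAt qdens (-2 * x * qdens x) x :=
  ((hasDerivAt_pow 2 x).neg.exp.const_mul _).congr_deriv (by simp [qdens]; ring)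

lemma tendsto_qdens_atTop : Tendsto qdens atTop (𝓝 0) := by
  have h := (tendsto_exp_atBot.comp <| tendsto_neg_atTop_atBot.comp <|
    tendsto_pow_atTop two_ne_zero).const_mul (π ^ (-(1 : ℝ) / 2))
  rw [mul_zero] at h
  exact h

lemma integral_Ioi_mul_qdens (a : ℝ) : ∫ y in Ioi a, y * qdens y = qdens a / 2 := by
  rw [integral_Ioi_of_hasDerivAt_of_tendsto' (f := fun y => -qdens y / 2) (m := 0)
    (fun y _ => (hasDerivAt_qdens y).neg.div_const 2 |>.congr_deriv (by ring))
    integrable_mul_qdens.integrableOn (by simpa using tendsto_qdens_atTop.neg.div_const 2)]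
  ring

lemma setIntegral_Ioi_qdens_le {a : ℝ} (ha : 0 < a) :
    ∫ y in Ioi a, qdens y ≤ qdens a / (2 * a) :=
  calc ∫ y in Ioi a, qdens y ≤ ∫ y in Ioi a, y * qdens y / a := by
        refine setIntegral_mono_on integrable_qdens.integrableOn
          (integrable_mul_qdens.integrableOn.div_const a) measurableSet_Ioi fun y hy => ?_
        rw [le_div_iff₀ ha, mul_comm]
        exact mul_le_mul_of_nonneg_right hy.out.le (qdens_pos y).le
    _ = qdens a / (2 * a) := by rw [integral_div, integral_Ioi_mul_qdens]; ring

lemma one_sub_qdens_div_le_Qcdf {x : ℝ} (hx : 0 < x) : 1 - qdens x / (2 * x) ≤ Qcdf x := by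
  have h := intervalIntegral.integral_Iic_add_Ioi (b := x) integrable_qdens.integrableOn
    integrable_qdens.integrableOn
  rw [integral_qdens] at h
  linarith [setIntegral_Ioi_qdens_le hx, show Qcdf x = ∫ y in Iic x, qdens y from rfl]

lemma mul_exp_sq_mem_Icc_of_eq {ν x : ℝ} (hν : 0 < ν) (hx : 0 < x)
    (h : 2 * x * Qcdf x / qdens x + 1 - ν⁻¹ = 0) :
    x * exp (x ^ 2) ∈ Icc (1 / (2 * ν * √π) - 1 / 2) (1 / (2 * ν * √π)) := by
  set g := x * exp (x ^ 2) with hg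
  have hg0 : 0 < 2 * √π * g := by positivity
  have hQ : 2 * √π * g * Qcdf x = ν⁻¹ - 1 := by
    rw [← sub_eq_zero, ← h, qdens_eq, hg, exp_neg]; field_simp; ring
  have hQ_ge : 1 - 1 / (2 * √π * g) ≤ Qcdf x := by
    convert one_sub_qdens_div_le_Qcdf hx using 2
    rw [qdens_eq, hg, exp_neg]; field_simp
  have hz : 1 / (2 * ν * √π) = ν⁻¹ / (2 * √π) := by field_simp
  rw [hz]
  constructor
  · calc ν⁻¹ / (2 * √π) - 1 / 2 ≤ ν⁻¹ / (2 * √π) - 1 / (2 * √π) := by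
          gcongr; linarith [one_le_sqrt.2 (by linarith [pi_gt_three] : (1 : ℝ) ≤ π)]
      _ = (ν⁻¹ - 1) / (2 * √π) := by rw [sub_div]
      _ ≤ g := by
          rw [div_le_iff₀ (by positivity), ← hQ, mul_comm g]
          exact mul_le_of_le_one_right hg0.le (Qcdf_le_one x)
  · have := mul_le_mul_of_nonneg_left hQ_ge hg0.le
    rw [mul_sub, mul_one, mul_one_div_cancel hg0.ne', hQ] at this
    rw [le_div_iff₀ (by positivity)]
    linarith

lemma strictMonoOn_mul_exp_sq : StrictMonoOn (fun x : ℝ => x * exp (x ^ 2)) (Ici 0) :=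
  fun _ ha _ _ hab => mul_lt_mul_of_lt_of_le_of_nonneg_of_pos hab
    (exp_le_exp.2 (pow_le_pow_left₀ ha.out hab.le 2)) ha.out (exp_pos _)

section

variable {ℓ s δ : ℝ}

lemma sqrt_mul_exp_sq_eq (hℓ : 0 < ℓ) (hs : s ^ 2 = ℓ - log ℓ / 2) :
    √ℓ * exp (s ^ 2) = exp ℓ := by
  rw [sqrt_eq_rpow, rpow_def_of_pos hℓ, ← exp_add, hs]
  ring_nf

lemma sqrt_le_mul_one_add {m : ℝ} (hℓ : 0 < ℓ) (hm : 0 ≤ m) (hmℓ : m ≤ ℓ) (hs : 0 ≤ s)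
    (hs2 : s ^ 2 = ℓ - m / 2) : √ℓ ≤ s * (1 + m / ℓ) := by
  rw [sqrt_le_left (by positivity), mul_pow, hs2, one_add_div hℓ.ne', div_pow,
    mul_div_assoc', le_div_iff₀ (by positivity)]
  nlinarith [mul_nonneg hm (sub_nonneg.2 (mul_self_le_mul_self hm hmℓ)), mul_nonneg hm (sq_nonneg ℓ)]

lemma le_sqrt_mul_one_sub {m : ℝ} (hℓ : 0 < ℓ) (hmℓ : m ≤ 4 * ℓ) (hs : 0 ≤ s)
    (hs2 : s ^ 2 = ℓ - m / 2) : s ≤ √ℓ * (1 - m / (4 * ℓ)) := by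
  have hw : 0 ≤ 1 - m / (4 * ℓ) := sub_nonneg.2 ((div_le_one (by positivity)).2 hmℓ)
  rw [← pow_le_pow_iff_left₀ hs (by positivity) two_ne_zero, mul_pow, sq_sqrt hℓ.le, hs2]
  have : ℓ * (1 - m / (4 * ℓ)) ^ 2 = ℓ - m / 2 + m ^ 2 / (16 * ℓ) := by field_simp; ring
  rw [this]
  linarith [show 0 ≤ m ^ 2 / (16 * ℓ) by positivity]

lemma exp_le_add_mul_exp_add_sq (hℓ : 1 ≤ ℓ) (hs : 0 < s) (hs2 : s ^ 2 = ℓ - log ℓ / 2)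
    (hδ : 0 ≤ δ) (hsδ : 2 * s * δ = log ℓ / ℓ) : exp ℓ ≤ (s + δ) * exp ((s + δ) ^ 2) := by
  have hℓ0 : 0 < ℓ := by linarith
  have hmℓ : log ℓ ≤ ℓ := (log_le_sub_one_of_pos hℓ0).trans (by linarith)
  calc exp ℓ = √ℓ * exp (s ^ 2) := (sqrt_mul_exp_sq_eq hℓ0 hs2).symm
    _ ≤ s * (1 + log ℓ / ℓ) * exp (s ^ 2) := by
        gcongr; exact sqrt_le_mul_one_add hℓ0 (log_nonneg hℓ) hmℓ hs.le hs2
    _ ≤ s * (exp (2 * s * δ) * exp (s ^ 2)) := by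
        rw [mul_assoc, hsδ]; gcongr; linarith [add_one_le_exp (log ℓ / ℓ)]
    _ ≤ s * exp ((s + δ) ^ 2) := by
        rw [← exp_add]; gcongr; nlinarith [sq_nonneg δ]
    _ ≤ (s + δ) * exp ((s + δ) ^ 2) := by gcongr; linarith

lemma sub_mul_exp_sub_sq_le (hℓ : exp 1 ≤ ℓ) (hs : 0 < s) (hs2 : s ^ 2 = ℓ - log ℓ / 2)
    (hδ : 0 ≤ δ) (hsδ : 2 * s * δ = log ℓ / ℓ) : (s - δ) * exp ((s - δ) ^ 2) ≤ exp ℓ - 1 / 2 := by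
  have hℓ0 : 0 < ℓ := (exp_pos 1).trans_le hℓ
  have hm1 : 1 ≤ log ℓ := by rw [← log_exp 1]; exact log_le_log (exp_pos 1) hℓ
  have hmℓ : log ℓ ≤ ℓ - 1 := log_le_sub_one_of_pos hℓ0
  set m := log ℓ
  set w := m / (4 * ℓ) with hw
  have hw0 : 0 < w := by positivity
  have hw1 : w ≤ 1 / 4 := by rw [hw, div_le_iff₀ (by positivity)]; linarith
  have hmw : m / ℓ = 4 * w := by rw [hw]; field_simp
  -- `δ² ≤ w` amounts to `m / ℓ ≤ s²`, and `m / ℓ ≤ 1 ≤ s²`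
  have hδw : δ ^ 2 ≤ w := by
    have h1 : m / ℓ ≤ s ^ 2 := by
      rw [div_le_iff₀ hℓ0]
      nlinarith [mul_nonneg (show 0 ≤ s ^ 2 - 1 by linarith) hℓ0.le]
    refine le_of_mul_le_mul_right ?_ (by positivity : 0 < 4 * s ^ 2)
    calc δ ^ 2 * (4 * s ^ 2) = m / ℓ * (m / ℓ) := by rw [← hsδ]; ring
      _ ≤ 4 * w * s ^ 2 := by rw [hmw] at h1 ⊢; gcongr
      _ = w * (4 * s ^ 2) := by ring
  have hmexp : 1 ≤ 4 * w * exp ℓ := by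
    rw [← hmw, div_mul_eq_mul_div, le_div_iff₀ hℓ0]
    calc 1 * ℓ ≤ 1 * exp ℓ := by linarith [add_one_le_exp ℓ]
      _ ≤ m * exp ℓ := by gcongr
  calc (s - δ) * exp ((s - δ) ^ 2) ≤ s * exp (s ^ 2 - 3 * w) := by
        gcongr
        · linarith
        · rw [sub_sq]; linarith
    _ = s * exp (s ^ 2) * (exp (3 * w))⁻¹ := by rw [exp_sub, div_eq_mul_inv, mul_assoc]
    _ ≤ √ℓ * (1 - w) * exp (s ^ 2) * (1 + 3 * w)⁻¹ := by
        gcongr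
        · exact mul_nonneg (mul_nonneg (sqrt_nonneg ℓ) (by linarith)) (exp_pos _).le
        · exact le_sqrt_mul_one_sub hℓ0 (by linarith) hs.le hs2
        · linarith [add_one_le_exp (3 * w)]
    _ = exp ℓ * ((1 - w) / (1 + 3 * w)) := by
        rw [← sqrt_mul_exp_sq_eq hℓ0 hs2]; ring
    _ ≤ exp ℓ - 1 / 2 := by
        rw [mul_div_assoc', div_le_iff₀ (by positivity)]
        nlinarith

theorem abs_sub_le_of_mul_exp_sq_mem_Icc {x : ℝ} (hℓ : exp 1 ≤ ℓ) (hs : 0 < s)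
    (hs2 : s ^ 2 = ℓ - log ℓ / 2) (hsδ : 2 * s * δ = log ℓ / ℓ) (hx : 0 ≤ x)
    (hlow : exp ℓ - 1 / 2 ≤ x * exp (x ^ 2)) (hup : x * exp (x ^ 2) ≤ exp ℓ) : |x - s| ≤ δ := by
  have h1ℓ : 1 ≤ ℓ := (one_le_exp zero_le_one).trans hℓ
  have hδ : 0 ≤ δ := by
    have h : 0 ≤ 2 * s * δ := hsδ ▸ div_nonneg (log_nonneg h1ℓ) (by linarith)
    exact nonneg_of_mul_nonneg_right h (by positivity)
  rw [abs_sub_le_iff]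
  constructor
  · by_contra! h
    have := strictMonoOn_mul_exp_sq (show 0 ≤ s + δ by positivity) hx (by linarith)
    linarith [exp_le_add_mul_exp_add_sq h1ℓ hs hs2 hδ hsδ]
  · by_contra! h
    have := strictMonoOn_mul_exp_sq hx (show 0 ≤ s - δ by linarith) (by linarith)
    linarith [sub_mul_exp_sub_sq_le hℓ hs hs2 hδ hsδ]

end

/-- If `x_ν > 0` solves `2xQ(x)/q(x) + 1 - ν⁻¹ = 0`, and `x̃_ν = (log z - ½ log log z)^{1/2}` with
`z = (2ν√π)⁻¹`, then for all sufficiently small `ν > 0`,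
`|x_ν - x̃_ν| ≤ ½ (log z - ½ log log z)^{-1/2} (log log z)/(log z)`. -/
theorem stmt_13 :
    ∃ ν₀ > (0 : ℝ), ∀ ν : ℝ, 0 < ν → ν < ν₀ → ∀ x : ℝ, 0 < x →
      2 * x * Qcdf x / qdens x + 1 - ν⁻¹ = 0 →
      |x - (Real.log (1 / (2 * ν * Real.sqrt Real.pi)) -
            (1 / 2) * Real.log (Real.log (1 / (2 * ν * Real.sqrt Real.pi)))) ^ ((1 : ℝ) / 2)| ≤
        (1 / 2) * (Real.log (1 / (2 * ν * Real.sqrt Real.pi)) -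
            (1 / 2) * Real.log (Real.log (1 / (2 * ν * Real.sqrt Real.pi)))) ^ (-(1 : ℝ) / 2) *
          (Real.log (Real.log (1 / (2 * ν * Real.sqrt Real.pi))) /
            Real.log (1 / (2 * ν * Real.sqrt Real.pi))) := by
  refine ⟨exp (-3) / (2 * √π), by positivity, fun ν hν hνlt x hx heq => ?_⟩
  obtain ⟨hlow, hup⟩ := mul_exp_sq_mem_Icc_of_eq hν hx heq
  set z := 1 / (2 * ν * √π)
  have hz : exp 3 < z := by
    have h : 2 * ν * √π < exp (-3) := by rw [lt_div_iff₀ (by positivity)] at hνlt; linarith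
    rw [lt_div_iff₀ (by positivity)]
    calc exp 3 * (2 * ν * √π) < exp 3 * exp (-3) := by gcongr
      _ = 1 := by rw [← exp_add]; norm_num
  set ℓ := log z
  have hzℓ : exp ℓ = z := exp_log ((exp_pos 3).trans hz)
  have hℓ : exp 1 ≤ ℓ := by
    have : 3 < ℓ := by rw [← log_exp 3]; exact log_lt_log (exp_pos 3) hz
    linarith [exp_one_lt_d9]
  have hL : 0 < ℓ - 1 / 2 * log ℓ := by
    linarith [log_le_sub_one_of_pos ((exp_pos 1).trans_le hℓ), exp_pos 1]
  rw [← sqrt_eq_rpow, show -(1 : ℝ) / 2 = -(1 / 2) by ring, rpow_neg hL.le, ← sqrt_eq_rpow]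
  refine abs_sub_le_of_mul_exp_sq_mem_Icc hℓ (sqrt_pos.2 hL) (by rw [sq_sqrt hL.le]; ring)
    ?_ hx.le (hzℓ ▸ hlow) (hzℓ ▸ hup)
  have hs := (sqrt_pos.2 hL).ne'
  generalize √(ℓ - 1 / 2 * log ℓ) = s at hs ⊢
  field_simp
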